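/- arXiv:0911.4434 — 5 statements merged into one kernel-verified Lean document; each statement's English description precedes it below -/
import Mathlib

section
/- The map Φ on 2×2 complex matrices defined by Φ([[a,b],[c,d]]) = [[(a+d)/2, λ₀b],[λ̄₀c, (a+d)/2]], where |λ₀| = 1, is a linear, unital, positive map. -/
open ComplexOrder

/-!
Writing `P` for the swap matrix, `x ↦ (x + P xᵀ Pᴴ) / 2` averages the diagonal of a `2 × 2`
matrix and keeps its off-diagonal entries, and conjugating by `diag(λ₀, 1)` multiplies the
off-diagonal entries by `λ₀` and `λ̄₀` while fixing the diagonal because `|λ₀| = 1`. Transpose,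
congruence, sums and nonnegative multiples all preserve positive semidefiniteness.
-/

namespace Matrix

variable {𝕜 : Type*} [RCLike 𝕜]

theorem PosSemidef.fin_two_avgDiag {x : Matrix (Fin 2) (Fin 2) 𝕜} (hx : x.PosSemidef) :
    (!![(x 0 0 + x 1 1) / 2, x 0 1; x 1 0, (x 0 0 + x 1 1) / 2]).PosSemidef := by
  let P : Matrix (Fin 2) (Fin 2) 𝕜 := !![0, 1; 1, 0]
  have hswap : P * xᵀ * Pᴴ = !![x 1 1, x 0 1; x 1 0, x 0 0] := by
    ext i j
    fin_cases i <;> fin_cases j <;> simp [P, mul_apply, Fin.sum_univ_two, vecMul, dotProduct]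
  have havg : !![(x 0 0 + x 1 1) / 2, x 0 1; x 1 0, (x 0 0 + x 1 1) / 2]
      = (2⁻¹ : 𝕜) • (x + P * xᵀ * Pᴴ) := by
    rw [hswap]
    ext i j
    fin_cases i <;> fin_cases j <;> simp <;> field_simp <;> ring
  rw [havg]
  exact (hx.add (hx.transpose.mul_mul_conjTranspose_same P)).smul (by positivity)

theorem PosSemidef.fin_two_phase {x : Matrix (Fin 2) (Fin 2) 𝕜} (hx : x.PosSemidef) {l : 𝕜}
    (hl : starRingEnd 𝕜 l * l = 1) :
    (!![x 0 0, l * x 0 1; starRingEnd 𝕜 l * x 1 0, x 1 1]).PosSemidef := by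
  have hconj : !![l, 0; 0, 1] * x * !![l, 0; 0, 1]ᴴ
      = !![x 0 0, l * x 0 1; starRingEnd 𝕜 l * x 1 0, x 1 1] := by
    ext i j
    fin_cases i <;> fin_cases j <;> simp [mul_apply, Fin.sum_univ_two, vecMul, dotProduct]
    · rw [mul_comm, ← mul_assoc, hl, one_mul]
    · exact mul_comm _ _
  exact hconj ▸ hx.mul_mul_conjTranspose_same _

end Matrix

/-- The map Φ([[a,b],[c,d]]) = [[(a+d)/2, λ₀b],[λ̄₀c, (a+d)/2]] on M₂(ℂ),
with |λ₀| = 1, is linear, unital and positive. -/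
theorem phi_linear_unital_positive (l : ℂ) (hl : ‖l‖ = 1) :
    IsLinearMap ℂ (fun x : Matrix (Fin 2) (Fin 2) ℂ =>
      !![(x 0 0 + x 1 1) / 2, l * x 0 1; (starRingEnd ℂ) l * x 1 0, (x 0 0 + x 1 1) / 2]) ∧
    (!![((1 : Matrix (Fin 2) (Fin 2) ℂ) 0 0 + (1 : Matrix (Fin 2) (Fin 2) ℂ) 1 1) / 2,
        l * (1 : Matrix (Fin 2) (Fin 2) ℂ) 0 1;
        (starRingEnd ℂ) l * (1 : Matrix (Fin 2) (Fin 2) ℂ) 1 0,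
        ((1 : Matrix (Fin 2) (Fin 2) ℂ) 0 0 + (1 : Matrix (Fin 2) (Fin 2) ℂ) 1 1) / 2]
      = (1 : Matrix (Fin 2) (Fin 2) ℂ)) ∧
    (∀ x : Matrix (Fin 2) (Fin 2) ℂ, x.PosSemidef →
      Matrix.PosSemidef
        !![(x 0 0 + x 1 1) / 2, l * x 0 1;
           (starRingEnd ℂ) l * x 1 0, (x 0 0 + x 1 1) / 2]) := by
  have hconj_mul : starRingEnd ℂ l * l = 1 := by
    rw [Complex.conj_mul', hl]
    norm_num
  refine ⟨⟨fun x y => ?_, fun c x => ?_⟩, ?_, fun x hx => ?_⟩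
  iterate 2
    ext i j
    fin_cases i <;> fin_cases j <;> simp <;> ring
  · simp [Matrix.one_fin_two]
  · simpa using hx.fin_two_avgDiag.fin_two_phase hconj_mul
end

section
/- For Φ([[a,b],[c,d]]) = [[(a+d)/2, λ₀b],[λ̄₀c, (a+d)/2]] on M₂(ℂ), where |λ₀| = 1, λ₀ ∉ {1,-1}, and λ₀³ ∉ {1,-1}, the set of eigenvalues of modulus one of the semigroup (Φⁿ : n ≥ 0) equals {1, λ₀, λ̄₀}, and this set is not closed under multiplication (hence not a group). -/
/-!
Φ = Φ_{l,m} fixes the identity, scales the matrix units `E₀₁` and `E₁₀` by `l` and `m`,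
and kills `diag(1, -1)`, so its nonzero eigenvalues are exactly `1`, `l`, `m`; with `m = l̄`
all three lie on the unit circle. The set `{1, l, l̄}` does not contain `l²`: `l² = 1` forces
`l = ±1`, `l² = l` forces `l = 1`, and `l² = l̄` forces `l³ = l l̄ = 1`.
-/

open Matrix

variable {K : Type*} [Field K]

def phi (l m : K) (x : Matrix (Fin 2) (Fin 2) K) : Matrix (Fin 2) (Fin 2) K :=
  !![(x 0 0 + x 1 1) / 2, l * x 0 1; m * x 1 0, (x 0 0 + x 1 1) / 2]

theorem phi_one [NeZero (2 : K)] (l m : K) : phi l m 1 = 1 := by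
  ext i j; fin_cases i <;> fin_cases j <;> simp [phi, one_apply]

theorem phi_single_zero_one (l m : K) : phi l m (single 0 1 1) = l • single 0 1 1 := by
  ext i j; fin_cases i <;> fin_cases j <;> simp [phi]

theorem phi_single_one_zero (l m : K) : phi l m (single 1 0 1) = m • single 1 0 1 := by
  ext i j; fin_cases i <;> fin_cases j <;> simp [phi]

theorem eq_of_phi_eq_smul [NeZero (2 : K)] {l m lam : K} {x : Matrix (Fin 2) (Fin 2) K}
    (hlam : lam ≠ 0) (hx : x ≠ 0) (h : phi l m x = lam • x) :
    lam = 1 ∨ lam = l ∨ lam = m := by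
  have h00 : (x 0 0 + x 1 1) / 2 = lam * x 0 0 := by simpa [phi] using congrFun₂ h 0 0
  have h01 : l * x 0 1 = lam * x 0 1 := by simpa [phi] using congrFun₂ h 0 1
  have h10 : m * x 1 0 = lam * x 1 0 := by simpa [phi] using congrFun₂ h 1 0
  have h11 : (x 0 0 + x 1 1) / 2 = lam * x 1 1 := by simpa [phi] using congrFun₂ h 1 1
  by_cases hb : x 0 1 = 0
  · by_cases hc : x 1 0 = 0
    · have had : x 0 0 = x 1 1 := mul_left_cancel₀ hlam (h00.symm.trans h11)
      have ha : x 0 0 ≠ 0 := fun ha ↦ hx <| by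
        ext i j; fin_cases i <;> fin_cases j <;> simp [ha, hb, hc, ← had]
      refine .inl (mul_right_cancel₀ ha ?_).symm
      rw [← h00, ← had, one_mul, add_self_div_two]
    · exact .inr (.inr (mul_right_cancel₀ hc h10).symm)
  · exact .inr (.inl (mul_right_cancel₀ hb h01).symm)

theorem exists_phi_eq_smul_iff [NeZero (2 : K)] {l m lam : K} (hlam : lam ≠ 0) :
    (∃ x, x ≠ 0 ∧ phi l m x = lam • x) ↔ lam = 1 ∨ lam = l ∨ lam = m := by
  refine ⟨fun ⟨x, hx, h⟩ ↦ eq_of_phi_eq_smul hlam hx h, ?_⟩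
  rintro (rfl | rfl | rfl)
  · exact ⟨1, one_ne_zero, (phi_one l m).trans (one_smul K 1).symm⟩
  · exact ⟨single 0 1 1, fun h ↦ by simpa using congrFun₂ h 0 1, phi_single_zero_one lam m⟩
  · exact ⟨single 1 0 1, fun h ↦ by simpa using congrFun₂ h 1 0, phi_single_one_zero l lam⟩

open ComplexConjugate in
theorem Complex.mul_self_notMem_one_self_conj {l : ℂ} (hl : ‖l‖ = 1) (h1 : l ≠ 1)
    (h2 : l ≠ -1) (h3 : l ^ 3 ≠ 1) : l * l ∉ ({1, l, conj l} : Set ℂ) := by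
  have hl0 : l ≠ 0 := norm_ne_zero_iff.mp (hl ▸ one_ne_zero)
  rintro (h | h | h)
  · exact (mul_self_eq_one_iff.mp h).elim h1 h2
  · exact h1 (mul_left_cancel₀ hl0 (h.trans (mul_one l).symm))
  · refine h3 ?_
    calc l ^ 3 = l * (l * l) := by ring
      _ = ‖l‖ ^ 2 := by rw [h, Complex.mul_conj']
      _ = 1 := by simp [hl]

theorem phi_point_spectrum_not_group_general (l : ℂ) (hl : ‖l‖ = 1)
    (h1 : l ≠ 1) (h2 : l ≠ -1) (h3 : l ^ 3 ≠ 1) :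
    {lam : ℂ | ‖lam‖ = 1 ∧ ∃ x : Matrix (Fin 2) (Fin 2) ℂ, x ≠ 0 ∧
        !![(x 0 0 + x 1 1) / 2, l * x 0 1;
           (starRingEnd ℂ) l * x 1 0, (x 0 0 + x 1 1) / 2] = lam • x} =
      {1, l, starRingEnd ℂ l} ∧
    ¬ (∀ a ∈ ({1, l, starRingEnd ℂ l} : Set ℂ), ∀ b ∈ ({1, l, starRingEnd ℂ l} : Set ℂ),
        a * b ∈ ({1, l, starRingEnd ℂ l} : Set ℂ)) := by
  refine ⟨?_, fun h ↦
    Complex.mul_self_notMem_one_self_conj hl h1 h2 h3 (h l (by simp) l (by simp))⟩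
  ext lam
  have hne : ‖lam‖ = 1 → lam ≠ 0 := fun h ↦ norm_ne_zero_iff.mp (h ▸ one_ne_zero)
  change (‖lam‖ = 1 ∧ ∃ x, x ≠ 0 ∧ phi l (starRingEnd ℂ l) x = lam • x) ↔ _
  simp only [Set.mem_insert_iff, Set.mem_singleton_iff]
  constructor
  · rintro ⟨hnorm, hx⟩
    exact (exists_phi_eq_smul_iff (hne hnorm)).mp hx
  · intro h
    have hnorm : ‖lam‖ = 1 := by rcases h with rfl | rfl | rfl <;> simp [hl]
    exact ⟨hnorm, (exists_phi_eq_smul_iff (hne hnorm)).mpr h⟩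

/-- For Φ([[a,b],[c,d]]) = [[(a+d)/2, λ₀b],[λ̄₀c, (a+d)/2]] on M₂(ℂ) with
|λ₀| = 1, λ₀ ∉ {1,-1} and λ₀³ ∉ {1,-1}, the point spectrum of (Φⁿ) is {1, λ₀, λ̄₀},
and this set is not closed under multiplication (hence not a group). -/
theorem phi_point_spectrum_not_group (l : ℂ) (hl : ‖l‖ = 1)
    (h1 : l ≠ 1) (h2 : l ≠ -1) (h3 : l ^ 3 ≠ 1) (h4 : l ^ 3 ≠ -1) :
    {lam : ℂ | ‖lam‖ = 1 ∧ ∃ x : Matrix (Fin 2) (Fin 2) ℂ, x ≠ 0 ∧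
        !![(x 0 0 + x 1 1) / 2, l * x 0 1;
           (starRingEnd ℂ) l * x 1 0, (x 0 0 + x 1 1) / 2] = lam • x} =
      {1, l, starRingEnd ℂ l} ∧
    ¬ (∀ a ∈ ({1, l, starRingEnd ℂ l} : Set ℂ), ∀ b ∈ ({1, l, starRingEnd ℂ l} : Set ℂ),
        a * b ∈ ({1, l, starRingEnd ℂ l} : Set ℂ)) :=
  phi_point_spectrum_not_group_general l hl h1 h2 h3
end

section
/- There exists an ergodic semigroup (Φⁿ) of linear positive unital trace-preserving maps on M₂(ℂ) whose point spectrum (set of modulus-one eigenvalues) is not a group under multiplication. -/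
/-!
Take `Φ x = ½ (A x Aᴴ + B xᵀ Bᴴ)` with `A = diag(1, i)` and `B = !![0, 1; i, 0]`. Both terms
preserve positivity (the transpose of a positive matrix is positive), and in coordinates `Φ`
replaces both diagonal entries by their mean and multiplies the off-diagonal entries by `-i` and
`i`. Hence its eigenvalues are `1` (on the scalars only), `0`, `-i` and `i`: the peripheral point
spectrum is `{1, i, -i}`, which does not contain `i * i = -1`.
-/

open ComplexOrder Matrix Complex

noncomputable section

def peripheralPointSpectrum {E : Type*} [AddCommGroup E] [Module ℂ E] (Φ : E →ₗ[ℂ] E) :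
    Set ℂ :=
  {μ | ‖μ‖ = 1 ∧ ∃ x ≠ 0, Φ x = μ • x}

namespace ErgodicCounterexample

def krausA : Matrix (Fin 2) (Fin 2) ℂ := !![1, 0; 0, I]

def krausB : Matrix (Fin 2) (Fin 2) ℂ := !![0, 1; I, 0]

def Phi : Matrix (Fin 2) (Fin 2) ℂ →ₗ[ℂ] Matrix (Fin 2) (Fin 2) ℂ where
  toFun x := (2⁻¹ : ℂ) • (krausA * x * krausAᴴ + krausB * xᵀ * krausBᴴ)
  map_add' x y := by
    simp only [transpose_add, Matrix.mul_add, Matrix.add_mul, smul_add]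
    abel
  map_smul' c x := by
    simp only [transpose_smul, Matrix.mul_smul, Matrix.smul_mul, smul_add, RingHom.id_apply]
    rw [smul_comm, smul_comm (2⁻¹ : ℂ) c]

theorem Phi_posSemidef {x : Matrix (Fin 2) (Fin 2) ℂ} (hx : x.PosSemidef) :
    (Phi x).PosSemidef :=
  ((hx.mul_mul_conjTranspose_same krausA).add
    (hx.transpose.mul_mul_conjTranspose_same krausB)).smul (by positivity : (0 : ℂ) ≤ 2⁻¹)

theorem Phi_apply (x : Matrix (Fin 2) (Fin 2) ℂ) :
    Phi x = !![(x 0 0 + x 1 1) / 2, -I * x 0 1; I * x 1 0, (x 0 0 + x 1 1) / 2] := by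
  ext i j
  fin_cases i <;> fin_cases j
  all_goals simp [Phi, krausA, krausB, mul_apply, vecMul, dotProduct, Fin.sum_univ_two]
  · ring
  · ring
  · ring
  · linear_combination (-(x 0 0 + x 1 1) / 2) * I_sq

theorem Phi_one : Phi 1 = 1 := by
  rw [Phi_apply, one_fin_two]
  simp

theorem trace_Phi (x : Matrix (Fin 2) (Fin 2) ℂ) : (Phi x).trace = x.trace := by
  rw [Phi_apply, trace_fin_two, trace_fin_two]
  simp only [of_apply, cons_val', cons_val_zero, cons_val_one, empty_val', cons_val_fin_one]
  ring

theorem Phi_single_one_zero : Phi (single 1 0 1) = I • single 1 0 1 := by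
  rw [Phi_apply]
  ext i j
  fin_cases i <;> fin_cases j <;> simp

theorem entries_of_Phi_eq_smul {x : Matrix (Fin 2) (Fin 2) ℂ} {μ : ℂ} (h : Phi x = μ • x) :
    (μ + I) * x 0 1 = 0 ∧ (μ - I) * x 1 0 = 0 ∧
      2 * μ * x 0 0 = x 0 0 + x 1 1 ∧ 2 * μ * x 1 1 = x 0 0 + x 1 1 := by
  rw [Phi_apply] at h
  have e00 := congr_fun₂ h 0 0
  have e01 := congr_fun₂ h 0 1
  have e10 := congr_fun₂ h 1 0
  have e11 := congr_fun₂ h 1 1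
  simp only [of_apply, cons_val', cons_val_zero, cons_val_one, empty_val', cons_val_fin_one,
    Matrix.smul_apply, smul_eq_mul] at e00 e01 e10 e11
  exact ⟨by linear_combination -e01, by linear_combination -e10,
    by linear_combination -2 * e00, by linear_combination -2 * e11⟩

theorem eq_smul_one_of_Phi_eq_self {x : Matrix (Fin 2) (Fin 2) ℂ} (h : Phi x = x) :
    x = x 0 0 • 1 := by
  obtain ⟨h01, h10, h00, -⟩ := entries_of_Phi_eq_smul (μ := 1) (by rwa [one_smul])
  have hb : x 0 1 = 0 := (mul_eq_zero.mp h01).resolve_left (by simp [Complex.ext_iff])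
  have hc : x 1 0 = 0 := (mul_eq_zero.mp h10).resolve_left (by simp [Complex.ext_iff])
  have hd : x 1 1 = x 0 0 := by linear_combination -h00
  rw [eta_fin_two x, hb, hc, hd, one_fin_two]
  simp

theorem eq_zero_of_Phi_eq_neg {x : Matrix (Fin 2) (Fin 2) ℂ} (h : Phi x = -x) : x = 0 := by
  obtain ⟨h01, h10, h00, h11⟩ := entries_of_Phi_eq_smul (μ := -1) (by rwa [neg_one_smul])
  have hb : x 0 1 = 0 := (mul_eq_zero.mp h01).resolve_left (by simp [Complex.ext_iff])
  have hc : x 1 0 = 0 := (mul_eq_zero.mp h10).resolve_left (by simp [Complex.ext_iff])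
  have ha : x 0 0 = 0 := by linear_combination (h11 - 3 * h00) / 8
  have hd : x 1 1 = 0 := by linear_combination (h00 - 3 * h11) / 8
  ext i j
  fin_cases i <;> fin_cases j <;> simp [ha, hb, hc, hd]

theorem I_mem_peripheralPointSpectrum_Phi : I ∈ peripheralPointSpectrum Phi :=
  ⟨norm_I, single 1 0 1, fun h ↦ by simpa using congr_fun₂ h 1 0, Phi_single_one_zero⟩

theorem neg_one_notMem_peripheralPointSpectrum_Phi : -1 ∉ peripheralPointSpectrum Phi := by
  rintro ⟨-, x, hx, h⟩
  exact hx (eq_zero_of_Phi_eq_neg (by rwa [neg_one_smul] at h))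

end ErgodicCounterexample

open ErgodicCounterexample in
/-- There exists an ergodic semigroup (Φⁿ) of linear positive unital
trace-preserving maps on M₂(ℂ) whose point spectrum is not a group under
multiplication (in particular, it is not closed under multiplication). -/
theorem exists_ergodic_semigroup_spectrum_not_group :
    ∃ Φ : Matrix (Fin 2) (Fin 2) ℂ →ₗ[ℂ] Matrix (Fin 2) (Fin 2) ℂ,
      (∀ x : Matrix (Fin 2) (Fin 2) ℂ, x.PosSemidef → (Φ x).PosSemidef) ∧
      Φ 1 = 1 ∧
      (∀ x : Matrix (Fin 2) (Fin 2) ℂ,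
        (1 / 2 : ℂ) * Matrix.trace (Φ x) = (1 / 2 : ℂ) * Matrix.trace x) ∧
      (∀ x : Matrix (Fin 2) (Fin 2) ℂ, Φ x = x →
        ∃ θ : ℂ, x = θ • (1 : Matrix (Fin 2) (Fin 2) ℂ)) ∧
      ¬ (∀ a ∈ {lam : ℂ | ‖lam‖ = 1 ∧ ∃ x ≠ 0, Φ x = lam • x},
         ∀ b ∈ {lam : ℂ | ‖lam‖ = 1 ∧ ∃ x ≠ 0, Φ x = lam • x},
           a * b ∈ {lam : ℂ | ‖lam‖ = 1 ∧ ∃ x ≠ 0, Φ x = lam • x}) := by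
  refine ⟨Phi, fun _ ↦ Phi_posSemidef, Phi_one, fun x ↦ by rw [trace_Phi],
    fun x hx ↦ ⟨x 0 0, eq_smul_one_of_Phi_eq_self hx⟩, fun hmul ↦ ?_⟩
  have hII : I * I ∈ peripheralPointSpectrum Phi :=
    hmul _ I_mem_peripheralPointSpectrum_Phi _ I_mem_peripheralPointSpectrum_Phi
  rw [I_mul_I] at hII
  exact neg_one_notMem_peripheralPointSpectrum_Phi hII
end
end

section
/- There exists an ergodic positive unital trace-preserving linear map Φ on M₂(ℂ) possessing a modulus-one eigenvalue whose eigenspace has complex dimension strictly greater than one. -/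
open ComplexOrder

noncomputable def myU : Matrix (Fin 2) (Fin 2) ℂ := !![0, 1; -1, 0]

noncomputable def myPhi : Matrix (Fin 2) (Fin 2) ℂ →ₗ[ℂ] Matrix (Fin 2) (Fin 2) ℂ where
  toFun x := !![x 1 1, -x 0 1; -x 1 0, x 0 0]
  map_add' x y := by
    ext i j; fin_cases i <;> fin_cases j <;> simp [Matrix.add_apply] <;> ring
  map_smul' c x := by
    ext i j; fin_cases i <;> fin_cases j <;> simp [Matrix.smul_apply] <;> ring

lemma myPhi_eq (x : Matrix (Fin 2) (Fin 2) ℂ) : myPhi x = (myU * x * myU.conjTranspose).transpose := by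
  ext i j
  fin_cases i <;> fin_cases j <;>
    simp [myPhi, myU, Matrix.mul_apply, Matrix.vecMul, dotProduct, Fin.sum_univ_two, Matrix.conjTranspose_apply] <;> ring

/-- There exists an ergodic positive unital trace-preserving linear map Φ
on M₂(ℂ) with a modulus-one eigenvalue whose eigenspace has complex dimension > 1. -/
theorem exists_ergodic_map_with_big_eigenspace :
    ∃ Φ : Matrix (Fin 2) (Fin 2) ℂ →ₗ[ℂ] Matrix (Fin 2) (Fin 2) ℂ,
      (∀ x : Matrix (Fin 2) (Fin 2) ℂ, x.PosSemidef → (Φ x).PosSemidef) ∧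
      Φ 1 = 1 ∧
      (∀ x : Matrix (Fin 2) (Fin 2) ℂ,
        (1 / 2 : ℂ) * Matrix.trace (Φ x) = (1 / 2 : ℂ) * Matrix.trace x) ∧
      (∀ x : Matrix (Fin 2) (Fin 2) ℂ, Φ x = x →
        ∃ θ : ℂ, x = θ • (1 : Matrix (Fin 2) (Fin 2) ℂ)) ∧
      ∃ lam : ℂ, ‖lam‖ = 1 ∧
        1 < Module.finrank ℂ (Module.End.eigenspace Φ lam) := by
  refine ⟨myPhi, ?_, ?_, ?_, ?_, ?_⟩
  · intro x hx
    rw [myPhi_eq]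
    exact ((hx.mul_mul_conjTranspose_same myU)).transpose
  · ext i j
    fin_cases i <;> fin_cases j <;> simp [myPhi, Matrix.one_apply]
  · intro x
    simp [myPhi, Matrix.trace_fin_two]
    ring
  · intro x hx
    refine ⟨x 0 0, ?_⟩
    have h00 := (congrFun (congrFun hx 0) 0)
    have h01 := (congrFun (congrFun hx 0) 1)
    have h10 := (congrFun (congrFun hx 1) 0)
    simp [myPhi] at h00 h01 h10
    ext i j
    fin_cases i <;> fin_cases j <;> simp [Matrix.one_apply]
    · linear_combination (-1/2 : ℂ) * h01
    · linear_combination (-1/2 : ℂ) * h10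
    · exact h00
  · refine ⟨-1, by simp, ?_⟩
    set E12 : Matrix (Fin 2) (Fin 2) ℂ := !![0, 1; 0, 0] with hE12
    set E21 : Matrix (Fin 2) (Fin 2) ℂ := !![0, 0; 1, 0] with hE21
    have hmem1 : E12 ∈ Module.End.eigenspace myPhi (-1) := by
      rw [Module.End.mem_eigenspace_iff]
      ext i j; fin_cases i <;> fin_cases j <;> simp [myPhi, hE12]
    have hmem2 : E21 ∈ Module.End.eigenspace myPhi (-1) := by
      rw [Module.End.mem_eigenspace_iff]
      ext i j; fin_cases i <;> fin_cases j <;> simp [myPhi, hE21]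
    have hli : LinearIndependent ℂ ![E12, E21] := by
      rw [LinearIndependent.pair_iff]
      intro s t hst
      constructor
      · have := (congrFun (congrFun hst 0) 1)
        simpa [hE12, hE21] using this
      · have := (congrFun (congrFun hst 1) 0)
        simpa [hE12, hE21] using this
    have hspan : Submodule.span ℂ {E12, E21} ≤ Module.End.eigenspace myPhi (-1) := by
      rw [Submodule.span_le]
      intro v hv
      rcases hv with h | h
      · exact h ▸ hmem1
      · exact h ▸ hmem2
    have h2 : Module.finrank ℂ (Submodule.span ℂ {E12, E21}) = 2 := by
      have : ({E12, E21} : Set (Matrix (Fin 2) (Fin 2) ℂ)) = Set.range ![E12, E21] := by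
        simp [Set.range_subset_iff]
        ext v
        simp [Matrix.range_cons, Matrix.range_empty]
        tauto
      rw [this, finrank_span_eq_card hli]
      simp
    have := Submodule.finrank_mono hspan
    omega
end

section
/- Let M be abelian, Ψ : M → M positive normal unital ergodic with point spectrum {1,-1}, with the eigenspace for -1 spanned by a unitary u ∈ M (Ψ(u) = -u). Let λ₀ = i and define Φ on Mat₂(M) by Φ([[a,b],[c,d]]) = [[Ψ((a+d)/2), iΨ(b)],[-iΨ(c), Ψ((a+d)/2)]]. Then the eigenspace of Φ for eigenvalue i equals {α₁[[0,1],[0,0]] + α₂[[0,0],[u,0]] : α₁, α₂ ∈ ℂ}, which is two-dimensional. -/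
/-!
If `Φ x = i • x`, comparing entries forces the two diagonal entries to coincide with an
`i`-eigenvector of `Ψ`, which vanishes because `i` is not in the peripheral point spectrum
`{1, -1}`; the off-diagonal entries are eigenvectors of `Ψ` for `1` and `-1`, so they lie in
`ℂ • 1` (ergodicity) and `ℂ • u`.
-/

theorem matrix_phi_apply_eq_I_smul_iff {M : Type*} [AddCommGroup M] [Module ℂ M]
    (Ψ : M →ₗ[ℂ] M) (x : Matrix (Fin 2) (Fin 2) M) :
    !![Ψ ((2⁻¹ : ℂ) • (x 0 0 + x 1 1)), Complex.I • Ψ (x 0 1);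
        (-Complex.I) • Ψ (x 1 0), Ψ ((2⁻¹ : ℂ) • (x 0 0 + x 1 1))] = Complex.I • x ↔
      x 0 0 = x 1 1 ∧ Ψ (x 0 0) = Complex.I • x 0 0 ∧ Ψ (x 0 1) = x 0 1 ∧ Ψ (x 1 0) = -x 1 0 := by
  have halve : ∀ a : M, (2⁻¹ : ℂ) • (a + a) = a := fun a => by module
  have hI := smul_right_injective M Complex.I_ne_zero
  constructor
  · intro h
    have h00 : Ψ ((2⁻¹ : ℂ) • (x 0 0 + x 1 1)) = Complex.I • x 0 0 := congrFun (congrFun h 0) 0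
    have h11 : Ψ ((2⁻¹ : ℂ) • (x 0 0 + x 1 1)) = Complex.I • x 1 1 := congrFun (congrFun h 1) 1
    have h01 : Complex.I • Ψ (x 0 1) = Complex.I • x 0 1 := congrFun (congrFun h 0) 1
    have h10 : (-Complex.I) • Ψ (x 1 0) = Complex.I • x 1 0 := congrFun (congrFun h 1) 0
    have hdiag : x 0 0 = x 1 1 := hI (h00.symm.trans h11)
    refine ⟨hdiag, ?_, hI h01, hI ?_⟩
    · rwa [← hdiag, halve] at h00
    · change Complex.I • Ψ (x 1 0) = Complex.I • -x 1 0
      rw [smul_neg, ← h10, neg_smul, neg_neg]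
  · rintro ⟨hdiag, h00, h01, h10⟩
    ext i j
    fin_cases i <;> fin_cases j <;> simp [← hdiag, halve, h00, h01, h10]

theorem exists_eq_smul_add_smul_iff {R M : Type*} [Semiring R] [AddCommMonoid M] [Module R M]
    (a b : M) (x : Matrix (Fin 2) (Fin 2) M) :
    (∃ α₁ α₂ : R, x = α₁ • !![0, a; 0, 0] + α₂ • !![0, 0; b, 0]) ↔
      x 0 0 = 0 ∧ x 1 1 = 0 ∧ (∃ α : R, x 0 1 = α • a) ∧ ∃ α : R, x 1 0 = α • b := by
  constructor
  · rintro ⟨α₁, α₂, rfl⟩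
    exact ⟨by simp, by simp, ⟨α₁, by simp⟩, α₂, by simp⟩
  · rintro ⟨h00, h11, ⟨α₁, h01⟩, α₂, h10⟩
    refine ⟨α₁, α₂, ?_⟩
    ext i j
    fin_cases i <;> fin_cases j <;> simp [h00, h11, h01, h10]

theorem linearIndependent_offDiag_pair {K M : Type*} [Field K] [AddCommGroup M] [Module K M]
    {a b : M} (ha : a ≠ 0) (hb : b ≠ 0) :
    LinearIndependent K ![!![0, a; 0, 0], !![0, 0; b, 0]] := by
  rw [LinearIndependent.pair_iff]
  intro s t hst
  have h01 := congrFun (congrFun hst 0) 1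
  have h10 := congrFun (congrFun hst 1) 0
  simp at h01 h10
  exact ⟨h01.resolve_right ha, h10.resolve_right hb⟩

theorem eq_zero_of_apply_eq_smul_of_not_mem {M : Type*} [AddCommGroup M] [Module ℂ M]
    {Ψ : M →ₗ[ℂ] M} {S : Set ℂ}
    (hspec : {μ : ℂ | ‖μ‖ = 1 ∧ ∃ a : M, a ≠ 0 ∧ Ψ a = μ • a} = S)
    {μ : ℂ} (hμ : ‖μ‖ = 1) (hμS : μ ∉ S) {a : M} (ha : Ψ a = μ • a) : a = 0 := by
  by_contra hne
  exact hμS (hspec ▸ ⟨hμ, a, hne, ha⟩)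

theorem matrix_phi_eigenspace_i_general
    {M : Type*} [NormedCommRing M] [StarRing M] [NormedAlgebra ℂ M]
    (Ψ : M →ₗ[ℂ] M) (hΨunital : Ψ 1 = 1)
    (hΨerg : ∀ a : M, Ψ a = a → ∃ θ : ℂ, a = θ • (1 : M))
    (hspec : {μ : ℂ | ‖μ‖ = 1 ∧ ∃ a : M, a ≠ 0 ∧ Ψ a = μ • a} = {1, -1})
    (u : M) (huni : star u * u = 1 ∧ u * star u = 1) (hu : Ψ u = -u)
    (hM1 : ∀ a : M, Ψ a = -a → ∃ α : ℂ, a = α • u) :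
    {x : Matrix (Fin 2) (Fin 2) M |
        !![Ψ ((2⁻¹ : ℂ) • (x 0 0 + x 1 1)), Complex.I • Ψ (x 0 1);
           (-Complex.I) • Ψ (x 1 0), Ψ ((2⁻¹ : ℂ) • (x 0 0 + x 1 1))] = Complex.I • x} =
      {x : Matrix (Fin 2) (Fin 2) M | ∃ α₁ α₂ : ℂ,
        x = α₁ • !![(0 : M), 1; 0, 0] + α₂ • !![(0 : M), 0; u, 0]} ∧
    LinearIndependent ℂ ![!![(0 : M), 1; 0, 0], !![(0 : M), 0; u, 0]] := by
  obtain ⟨-, a, ha, -⟩ : (1 : ℂ) ∈ {μ : ℂ | ‖μ‖ = 1 ∧ ∃ a : M, a ≠ 0 ∧ Ψ a = μ • a} := by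
    simp [hspec]
  have : Nontrivial M := ⟨⟨a, 0, ha⟩⟩
  have hu0 : u ≠ 0 := by
    rintro rfl
    simp at huni
  have hno_I_eigenvector : ∀ a : M, Ψ a = Complex.I • a → a = 0 := fun a =>
    eq_zero_of_apply_eq_smul_of_not_mem hspec Complex.norm_I (by simp [Complex.ext_iff])
  have hfix : ∀ a : M, Ψ a = a ↔ ∃ θ : ℂ, a = θ • 1 := fun a =>
    ⟨hΨerg a, by rintro ⟨θ, rfl⟩; rw [map_smul, hΨunital]⟩
  have hanti : ∀ a : M, Ψ a = -a ↔ ∃ α : ℂ, a = α • u := fun a =>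
    ⟨hM1 a, by rintro ⟨α, rfl⟩; rw [map_smul, hu, smul_neg]⟩
  refine ⟨Set.ext fun x => ?_, linearIndependent_offDiag_pair one_ne_zero hu0⟩
  rw [Set.mem_ofPred_eq, Set.mem_ofPred_eq, matrix_phi_apply_eq_I_smul_iff,
    exists_eq_smul_add_smul_iff, ← hfix, ← hanti]
  constructor
  · rintro ⟨hdiag, h00, h01, h10⟩
    have hzero := hno_I_eigenvector _ h00
    exact ⟨hzero, hdiag ▸ hzero, h01, h10⟩
  · rintro ⟨h00, h11, h01, h10⟩
    exact ⟨h00.trans h11.symm, by rw [h00, map_zero, smul_zero], h01, h10⟩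

/-- Let M be abelian, Ψ positive normal unital ergodic with point spectrum
{1,-1} and M_{-1} = ℂu for a unitary u (Ψ(u) = -u). For λ₀ = i, the eigenspace of
Φ([[a,b],[c,d]]) = [[Ψ((a+d)/2), iΨ(b)],[-iΨ(c), Ψ((a+d)/2)]] for eigenvalue i equals
{α₁[[0,1],[0,0]] + α₂[[0,0],[u,0]]}, which is two-dimensional. -/
theorem matrix_phi_eigenspace_i
    {M : Type*} [NormedCommRing M] [StarRing M] [CStarRing M] [NormedAlgebra ℂ M]
    [StarModule ℂ M] [CompleteSpace M] [PartialOrder M] [StarOrderedRing M]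
    (Ψ : M →ₗ[ℂ] M) (hΨunital : Ψ 1 = 1) (hΨpos : ∀ a : M, 0 ≤ a → 0 ≤ Ψ a)
    (hΨerg : ∀ a : M, Ψ a = a → ∃ θ : ℂ, a = θ • (1 : M))
    (hspec : {μ : ℂ | ‖μ‖ = 1 ∧ ∃ a : M, a ≠ 0 ∧ Ψ a = μ • a} = {1, -1})
    (u : M) (huni : star u * u = 1 ∧ u * star u = 1) (hu : Ψ u = -u)
    (hM1 : ∀ a : M, Ψ a = -a → ∃ α : ℂ, a = α • u) :
    {x : Matrix (Fin 2) (Fin 2) M |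
        !![Ψ ((2⁻¹ : ℂ) • (x 0 0 + x 1 1)), Complex.I • Ψ (x 0 1);
           (-Complex.I) • Ψ (x 1 0), Ψ ((2⁻¹ : ℂ) • (x 0 0 + x 1 1))] = Complex.I • x} =
      {x : Matrix (Fin 2) (Fin 2) M | ∃ α₁ α₂ : ℂ,
        x = α₁ • !![(0 : M), 1; 0, 0] + α₂ • !![(0 : M), 0; u, 0]} ∧
    LinearIndependent ℂ ![!![(0 : M), 1; 0, 0], !![(0 : M), 0; u, 0]] :=
  matrix_phi_eigenspace_i_general Ψ hΨunital hΨerg hspec u huni hu hM1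
end
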